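/- Let {P_i} be Hermitian projections on ℂ^{d'} and {P̂_i} Hermitian projections on ℂ^{d̂'}; let Q (size d'×d̂') satisfy Q† Q = 1 and P_i Q = Q P̂_i for all i; let U be a d'×d' unitary with U P_i = P_i U for all i; let T (size d'×d) and T̂ (size d̂'×d) satisfy T† T = 1, T̂† T̂ = 1, and Q T̂ = U T. Then for every d×d matrix ρ and all indices i, j: ‖ P̂_i (T̂ ρ T̂†) P̂_j ‖₁ = ‖ P_i (T ρ T†) P_j ‖₁. Consequently the ℓ₁-norm of POVM-based coherence C_{ℓ₁}(ρ, E) = ∑_{i≠j} ‖P_i E[ρ] P_j‖₁ is invariant under the choice of Naimark extension. -/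

import Mathlib

/-!
Both blocks are conjugates of one matrix by isometries: the intertwining relations
give `U (P i T) = Q (P̂ i T̂)`, hence `U (P i (T ρ Tᴴ) P j) Uᴴ = Q (P̂ i (T̂ ρ T̂ᴴ) P̂ j) Qᴴ`.
The trace norm is invariant under `B ↦ W B Wᴴ` for an isometry `W`, because
`√((W B Wᴴ)ᴴ (W B Wᴴ)) = W √(Bᴴ B) Wᴴ` and the trace is cyclic.
-/

open Matrix
open scoped ComplexOrder

/-- The trace norm `‖A‖₁ = tr √(Aᴴ A)` of a complex matrix. -/
noncomputable def traceNorm {m n : Type*} [Fintype m] [Fintype n] [DecidableEq n]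
    (A : Matrix m n ℂ) : ℝ :=
  (((Matrix.posSemidef_conjTranspose_mul_self A).1.eigenvectorUnitary : Matrix n n ℂ) *
      diagonal (((↑) : ℝ → ℂ) ∘ (Real.sqrt ·) ∘
        (Matrix.posSemidef_conjTranspose_mul_self A).1.eigenvalues) *
      (star (Matrix.posSemidef_conjTranspose_mul_self A).1.eigenvectorUnitary :
        Matrix n n ℂ)).trace.re

open scoped MatrixOrder

lemma traceNorm_eq_re_trace_sqrt {m n : Type*} [Fintype m] [Fintype n] [DecidableEq n]
    (A : Matrix m n ℂ) : traceNorm A = (CFC.sqrt (Aᴴ * A)).trace.re := by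
  have hA := Matrix.posSemidef_conjTranspose_mul_self A
  rw [CFC.sqrt_eq_cfc, cfc_nnreal_eq_real _ (Aᴴ * A) hA.nonneg, hA.1.cfc_eq]
  unfold traceNorm
  simp only [IsHermitian.cfc, Unitary.conjStarAlgAut_apply, Real.coe_sqrt, Real.coe_toNNReal']
  congr 5
  funext x
  simp [max_eq_left (hA.eigenvalues_nonneg x)]

lemma Matrix.sqrt_isometry_conj {𝕜 k l : Type*} [RCLike 𝕜] [Fintype k] [Fintype l]
    [DecidableEq k] [DecidableEq l] {W : Matrix k l 𝕜} (hW : Wᴴ * W = 1)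
    {A : Matrix l l 𝕜} (hA : A.PosSemidef) :
    CFC.sqrt (W * A * Wᴴ) = W * CFC.sqrt A * Wᴴ := by
  have hsqrt : (CFC.sqrt A).PosSemidef := (CFC.sqrt_nonneg A).posSemidef
  refine (CFC.sqrt_eq_iff _ _ (hA.mul_mul_conjTranspose_same W).nonneg
    (hsqrt.mul_mul_conjTranspose_same W).nonneg).mpr ?_
  calc W * CFC.sqrt A * Wᴴ * (W * CFC.sqrt A * Wᴴ)
      = W * (CFC.sqrt A * (Wᴴ * W) * CFC.sqrt A) * Wᴴ := by simp only [Matrix.mul_assoc]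
    _ = W * A * Wᴴ := by rw [hW, Matrix.mul_one, CFC.sqrt_mul_sqrt_self A hA.nonneg]

lemma traceNorm_isometry_conj {k l : Type*} [Fintype k] [Fintype l]
    [DecidableEq k] [DecidableEq l] {W : Matrix k l ℂ} (hW : Wᴴ * W = 1) (B : Matrix l l ℂ) :
    traceNorm (W * B * Wᴴ) = traceNorm B := by
  have hconj : (W * B * Wᴴ)ᴴ * (W * B * Wᴴ) = W * (Bᴴ * B) * Wᴴ := by
    simp only [conjTranspose_mul, conjTranspose_conjTranspose, Matrix.mul_assoc]
    rw [← Matrix.mul_assoc Wᴴ W, hW, Matrix.one_mul]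
  rw [traceNorm_eq_re_trace_sqrt, traceNorm_eq_re_trace_sqrt, hconj,
    Matrix.sqrt_isometry_conj hW (posSemidef_conjTranspose_mul_self B),
    trace_mul_cycle, hW, Matrix.one_mul]

lemma Matrix.conj_mul_mul_conjTranspose_eq_of_mul_eq {α k l m q : Type*} [Semiring α]
    [StarRing α] [Fintype k] [Fintype l] [Fintype m]
    {U : Matrix q k α} {Q : Matrix q l α} {A C : Matrix k m α} {B D : Matrix l m α}
    (hAB : U * A = Q * B) (hCD : U * C = Q * D) (ρ : Matrix m m α) :
    U * (A * ρ * Cᴴ) * Uᴴ = Q * (B * ρ * Dᴴ) * Qᴴ := by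
  calc U * (A * ρ * Cᴴ) * Uᴴ = U * A * ρ * (U * C)ᴴ := by
        simp only [conjTranspose_mul, Matrix.mul_assoc]
    _ = Q * B * ρ * (Q * D)ᴴ := by rw [hAB, hCD]
    _ = Q * (B * ρ * Dᴴ) * Qᴴ := by simp only [conjTranspose_mul, Matrix.mul_assoc]

lemma Matrix.mul_mul_conjTranspose_mul_eq_of_isHermitian {α k m : Type*} [Semiring α]
    [StarRing α] [Fintype k] [Fintype m] {P R : Matrix k k α} (hR : R.IsHermitian)
    (T : Matrix k m α) (ρ : Matrix m m α) : P * (T * ρ * Tᴴ) * R = P * T * ρ * (R * T)ᴴ := by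
  simp only [conjTranspose_mul, hR.eq, Matrix.mul_assoc]

theorem traceNorm_block_naimark_invariant_general
    (n d d' e' : ℕ)
    (P : Fin n → Matrix (Fin d') (Fin d') ℂ)
    (Phat : Fin n → Matrix (Fin e') (Fin e') ℂ)
    (hP : ∀ i, (P i)ᴴ = P i)
    (hPhat : ∀ i, (Phat i)ᴴ = Phat i)
    (Q : Matrix (Fin d') (Fin e') ℂ) (hQ : Qᴴ * Q = 1)
    (hQP : ∀ i, P i * Q = Q * Phat i)
    (U : Matrix (Fin d') (Fin d') ℂ) (hU1 : Uᴴ * U = 1)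
    (hUP : ∀ i, U * P i = P i * U)
    (T : Matrix (Fin d') (Fin d) ℂ)
    (That : Matrix (Fin e') (Fin d) ℂ)
    (hQT : Q * That = U * T) :
    ∀ (ρ : Matrix (Fin d) (Fin d) ℂ) (i j : Fin n),
      traceNorm (Phat i * (That * ρ * Thatᴴ) * Phat j)
        = traceNorm (P i * (T * ρ * Tᴴ) * P j) := by
  intro ρ i j
  have intertwine : ∀ i, U * (P i * T) = Q * (Phat i * That) := fun i => by
    rw [← Matrix.mul_assoc, hUP, Matrix.mul_assoc, ← hQT, ← Matrix.mul_assoc, hQP,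
      Matrix.mul_assoc]
  calc traceNorm (Phat i * (That * ρ * Thatᴴ) * Phat j)
      = traceNorm (Q * (Phat i * That * ρ * (Phat j * That)ᴴ) * Qᴴ) := by
        rw [traceNorm_isometry_conj hQ, mul_mul_conjTranspose_mul_eq_of_isHermitian (hPhat j)]
    _ = traceNorm (U * (P i * T * ρ * (P j * T)ᴴ) * Uᴴ) := by
        rw [conj_mul_mul_conjTranspose_eq_of_mul_eq (intertwine i) (intertwine j) ρ]
    _ = traceNorm (P i * (T * ρ * Tᴴ) * P j) := by
        rw [traceNorm_isometry_conj hU1, mul_mul_conjTranspose_mul_eq_of_isHermitian (hP j)]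

/-- Let `{P i}` and `{P̂ i}` be Hermitian projections on two Naimark spaces,
`Q` an isometry with `P i * Q = Q * P̂ i`, `U` a unitary commuting with every `P i`, and
`T`, `T̂` embedding isometries with `Q T̂ = U T`. Then for every `ρ` and all `i, j`:
`‖P̂ i (T̂ ρ T̂ᴴ) P̂ j‖₁ = ‖P i (T ρ Tᴴ) P j‖₁`; so the `ℓ₁`-norm of POVM-based coherence is
independent of the choice of Naimark extension. -/
theorem traceNorm_block_naimark_invariant
    (n d d' e' : ℕ)
    (P : Fin n → Matrix (Fin d') (Fin d') ℂ)
    (Phat : Fin n → Matrix (Fin e') (Fin e') ℂ)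
    (hP : ∀ i, (P i)ᴴ = P i) (hPproj : ∀ i, P i * P i = P i)
    (hPhat : ∀ i, (Phat i)ᴴ = Phat i) (hPhatproj : ∀ i, Phat i * Phat i = Phat i)
    (Q : Matrix (Fin d') (Fin e') ℂ) (hQ : Qᴴ * Q = 1)
    (hQP : ∀ i, P i * Q = Q * Phat i)
    (U : Matrix (Fin d') (Fin d') ℂ) (hU1 : Uᴴ * U = 1) (hU2 : U * Uᴴ = 1)
    (hUP : ∀ i, U * P i = P i * U)
    (T : Matrix (Fin d') (Fin d) ℂ) (hT : Tᴴ * T = 1)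
    (That : Matrix (Fin e') (Fin d) ℂ) (hThat : Thatᴴ * That = 1)
    (hQT : Q * That = U * T) :
    ∀ (ρ : Matrix (Fin d) (Fin d) ℂ) (i j : Fin n),
      traceNorm (Phat i * (That * ρ * Thatᴴ) * Phat j)
        = traceNorm (P i * (T * ρ * Tᴴ) * P j) :=
  traceNorm_block_naimark_invariant_general n d d' e' P Phat hP hPhat Q hQ hQP U hU1 hUP T That hQT
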